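/- Let k ≥ 2 and let A = A_k ⋯ A_1 be a factorization of a contraction A into contractions A_i : H_i → H_{i+1}. Then the factorization A = A_k ⋯ A_1 is k-regular if and only if for every j = 1, …, k−1 the two-factor factorization A_{j+1} ∘ (A_j ⋯ A_1) of the contraction A_{j+1} A_j ⋯ A_1 is 2-regular. -/

import Mathlib

noncomputable section

open ContinuousLinearMap

/-- The defect operator `D_A = (I - A*A)^{1/2}` of a contraction `A`. -/
def defectOp {E F : Type*} [NormedAddCommGroup E] [InnerProductSpace ℂ E]
    [CompleteSpace E] [NormedAddCommGroup F] [InnerProductSpace ℂ F] [CompleteSpace F]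
    (A : E →L[ℂ] F) : E →L[ℂ] E :=
  CFC.sqrt (1 - (adjoint A).comp A)

/-- The defect space `𝒟_A`, the closure of the range of the defect operator. -/
def defectSpace {E F : Type*} [NormedAddCommGroup E] [InnerProductSpace ℂ E]
    [CompleteSpace E] [NormedAddCommGroup F] [InnerProductSpace ℂ F] [CompleteSpace F]
    (A : E →L[ℂ] F) : Submodule ℂ E :=
  (LinearMap.range (defectOp A : E →ₗ[ℂ] E)).topologicalClosure

theorem defectOp_mem {E F : Type*} [NormedAddCommGroup E] [InnerProductSpace ℂ E]
    [CompleteSpace E] [NormedAddCommGroup F] [InnerProductSpace ℂ F] [CompleteSpace F]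
    (A : E →L[ℂ] F) (x : E) : defectOp A x ∈ defectSpace A :=
  Submodule.le_topologicalClosure _ (LinearMap.mem_range_self (defectOp A : E →ₗ[ℂ] E) x)

variable {H : ℕ → Type*} [∀ n, NormedAddCommGroup (H n)] [∀ n, InnerProductSpace ℂ (H n)]
  [∀ n, CompleteSpace (H n)]

/-- The product `A_{a+l-1} ⋯ A_{a+1} A_a : H a → H (a+l)` of a chain of operators. -/
def prodLen (A : ∀ n, H n →L[ℂ] H (n + 1)) (a : ℕ) : ∀ l : ℕ, H a →L[ℂ] H (a + l)
  | 0 => ContinuousLinearMap.id ℂ (H a)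
  | l + 1 => (A (a + l)).comp (prodLen A a l)

/-- The product `A_{b-1} ⋯ A_{a+1} A_a : H a → H b` (junk value `0` if `b < a`). -/
def prodSeg (A : ∀ n, H n →L[ℂ] H (n + 1)) (a b : ℕ) : H a →L[ℂ] H b :=
  if h : a ≤ b then (Nat.add_sub_cancel' h ▸ prodLen A a (b - a)) else 0

/-- The tuple `(D_{A_k} A_{k-1} ⋯ A_1 h, …, D_{A_2} A_1 h, D_{A_1} h)` (with zero-based
indexing: component `i` is `D_{A i} (A_{i-1} ⋯ A_0 h)`), viewed as an element of the
Hilbert (ℓ²) direct sum of the defect spaces. -/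
def defectTuple (A : ∀ n, H n →L[ℂ] H (n + 1)) (k : ℕ) (h : H 0) :
    PiLp 2 (fun i : Fin k => ↥(defectSpace (A i))) :=
  WithLp.toLp 2 (fun i => ⟨defectOp (A i) (prodSeg A 0 i h), defectOp_mem _ _⟩)

/-- The factorization `A = A_{k-1} ⋯ A_0` is `k`-regular if the set of defect tuples is dense
in the Hilbert direct sum of the defect spaces. -/
def IsRegularFactorization (A : ∀ n, H n →L[ℂ] H (n + 1)) (k : ℕ) : Prop :=
  Dense (Set.range (defectTuple A k))

/-- A two-factor factorization `A = B ∘ C` is `2`-regular if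
`{ D_B (C h) ⊕ D_C h : h }` is dense in `𝒟_B ⊕ 𝒟_C`. -/
def IsRegularPair {E F G : Type*} [NormedAddCommGroup E] [InnerProductSpace ℂ E]
    [CompleteSpace E] [NormedAddCommGroup F] [InnerProductSpace ℂ F] [CompleteSpace F]
    [NormedAddCommGroup G] [InnerProductSpace ℂ G] [CompleteSpace G]
    (B : F →L[ℂ] G) (C : E →L[ℂ] F) : Prop :=
  Dense (Set.range fun h : E =>
    ((WithLp.equiv 2 (↥(defectSpace B) × ↥(defectSpace C))).symm
      (⟨defectOp B (C h), defectOp_mem _ _⟩, ⟨defectOp C h, defectOp_mem _ _⟩)))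

end

/-!
For a contraction `B` one has `‖D_B x‖² = ‖x‖² - ‖B x‖²`. Writing `P_m = A_{m-1} ⋯ A_0`, these
identities telescope to `∑_{i<m} ‖D_{A_i} P_i h‖² = ‖h‖² - ‖P_m h‖² = ‖D_{P_m} h‖²`, so
`D_{P_m} h ↦ (D_{A_i} P_i h)_{i<m}` is isometric. Hence, once the `m`-tuples are dense, the
`(m+1)`-tuples `(D_{A_m} P_m h, (D_{A_i} P_i h)_{i<m})` are dense exactly when the pairs
`(D_{A_m} P_m h, D_{P_m} h)` are, i.e. when `A_m ∘ P_m` is 2-regular. Induction on `m` gives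
the theorem; the pair with `j = 0` is the trivial factorization `A_0 = A_0 ∘ I`, always regular.
-/

open ContinuousLinearMap

theorem Homeomorph.denseRange_comp_iff {α X Y : Type*} [TopologicalSpace X] [TopologicalSpace Y]
    (e : X ≃ₜ Y) {f : α → X} : DenseRange (e ∘ f) ↔ DenseRange f := by
  rw [DenseRange, Set.range_comp]; exact e.isDenseEmbedding.dense_image

theorem DenseRange.prodMk_of_dist_eq {α X Y Z : Type*} [PseudoMetricSpace X]
    [PseudoMetricSpace Y] [PseudoMetricSpace Z] {φ : α → Z} {f : α → X} {g : α → Y}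
    (hf : DenseRange f) (hfg : ∀ a b, dist (f a) (f b) = dist (g a) (g b))
    (hg : DenseRange fun a => (φ a, g a)) : DenseRange fun a => (φ a, f a) := by
  rw [Metric.denseRange_iff] at *
  rintro ⟨z, x⟩ r hr
  obtain ⟨a, ha⟩ := hf x (r / 2) (half_pos hr)
  obtain ⟨b, hb⟩ := hg (z, g a) (r / 2) (half_pos hr)
  rw [Prod.dist_eq, max_lt_iff] at hb
  refine ⟨b, ?_⟩
  rw [Prod.dist_eq]
  refine max_lt (hb.1.trans (half_lt_self hr)) ?_
  calc dist x (f b) ≤ dist x (f a) + dist (f a) (f b) := dist_triangle _ _ _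
    _ < r / 2 + r / 2 := by rw [hfg]; exact add_lt_add ha hb.2
    _ = r := add_halves r

theorem denseRange_prodMk_iff_of_dist_eq {α X Y Z : Type*} [PseudoMetricSpace X]
    [PseudoMetricSpace Y] [PseudoMetricSpace Z] {φ : α → Z} {f : α → X} {g : α → Y}
    (hf : DenseRange f) (hg : DenseRange g) (hfg : ∀ a b, dist (f a) (f b) = dist (g a) (g b)) :
    DenseRange (fun a => (φ a, f a)) ↔ DenseRange fun a => (φ a, g a) :=
  ⟨.prodMk_of_dist_eq hg fun a b => (hfg a b).symm, .prodMk_of_dist_eq hf hfg⟩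

def Homeomorph.finSnoc {n : ℕ} (α : Fin (n + 1) → Type*) [∀ i, TopologicalSpace (α i)] :
    α (Fin.last n) × (∀ i, α (Fin.castSucc i)) ≃ₜ ∀ i, α i where
  toEquiv := Fin.snocEquiv α
  continuous_toFun := continuous_snd.finSnoc continuous_fst
  continuous_invFun := (continuous_apply _).prodMk continuous_id.finInit

def PiLp.snocHomeomorph {n : ℕ} (p : ENNReal) (α : Fin (n + 1) → Type*)
    [∀ i, SeminormedAddCommGroup (α i)] :
    PiLp p α ≃ₜ α (Fin.last n) × PiLp p (fun i => α (Fin.castSucc i)) :=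
  (PiLp.homeomorph p α).trans <| (Homeomorph.finSnoc α).symm.trans <|
    (Homeomorph.refl _).prodCongr (PiLp.homeomorph p _).symm

section Defect

variable {E F : Type*} [NormedAddCommGroup E] [InnerProductSpace ℂ E] [CompleteSpace E]
  [NormedAddCommGroup F] [InnerProductSpace ℂ F] [CompleteSpace F]

theorem adjoint_comp_self_le_one {A : E →L[ℂ] F} (hA : ‖A‖ ≤ 1) : adjoint A ∘L A ≤ 1 := by
  have hpos : 0 ≤ adjoint A ∘L A :=
    (nonneg_iff_isPositive _).2 (isPositive_adjoint_comp_self A)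
  rw [← CStarAlgebra.norm_le_one_iff_of_nonneg _ hpos, norm_adjoint_comp_self]
  nlinarith [norm_nonneg A]

theorem norm_defectOp_apply_sq {A : E →L[ℂ] F} (hA : ‖A‖ ≤ 1) (x : E) :
    ‖defectOp A x‖ ^ 2 = ‖x‖ ^ 2 - ‖A x‖ ^ 2 := by
  have hD : IsSelfAdjoint (defectOp A) := IsSelfAdjoint.of_nonneg (CFC.sqrt_nonneg _)
  have hsq : adjoint (defectOp A) ∘L defectOp A = 1 - adjoint A ∘L A := by
    rw [hD.adjoint_eq]
    exact CFC.sqrt_mul_sqrt_self _ (sub_nonneg.2 (adjoint_comp_self_le_one hA))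
  rw [apply_norm_sq_eq_inner_adjoint_left, hsq, apply_norm_sq_eq_inner_adjoint_left (A := A)]
  simp [inner_sub_left, ← inner_self_eq_norm_sq (𝕜 := ℂ)]

theorem denseRange_defectOp (A : E →L[ℂ] F) :
    DenseRange (fun x : E => (⟨defectOp A x, defectOp_mem A x⟩ : defectSpace A)) := by
  rw [DenseRange, Subtype.dense_iff, ← Set.range_comp]
  exact closure_mono (LinearMap.coe_range _).le

theorem defectOp_id : defectOp (ContinuousLinearMap.id ℂ E) = 0 := by
  rw [defectOp, adjoint_id, id_comp, ← one_def, sub_self, CFC.sqrt_zero]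

theorem isRegularPair_iff {G : Type*} [NormedAddCommGroup G] [InnerProductSpace ℂ G]
    [CompleteSpace G] {B : F →L[ℂ] G} {C : E →L[ℂ] F} :
    IsRegularPair B C ↔ DenseRange fun h =>
      ((⟨defectOp B (C h), defectOp_mem _ _⟩ : defectSpace B),
        (⟨defectOp C h, defectOp_mem _ _⟩ : defectSpace C)) :=
  (WithLp.homeomorphProd 2 _ _).symm.denseRange_comp_iff

theorem isRegularPair_id (B : E →L[ℂ] F) : IsRegularPair B (ContinuousLinearMap.id ℂ E) := by
  have hbot : defectSpace (ContinuousLinearMap.id ℂ E) = ⊥ := by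
    simp [defectSpace, defectOp_id]
  have : Subsingleton (defectSpace (ContinuousLinearMap.id ℂ E)) := by
    rw [hbot]; infer_instance
  have hsurj : Function.Surjective fun z : defectSpace B =>
      (z, (0 : defectSpace (ContinuousLinearMap.id ℂ E))) :=
    fun y => ⟨y.1, Prod.ext rfl (Subsingleton.elim _ _)⟩
  rw [isRegularPair_iff]
  convert hsurj.denseRange.comp (denseRange_defectOp B) (by fun_prop) using 1
  funext h
  exact Prod.ext rfl (Subsingleton.elim _ _)

end Defect

section Chain

variable {H : ℕ → Type*} [∀ n, NormedAddCommGroup (H n)] [∀ n, InnerProductSpace ℂ (H n)]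
  (A : ∀ n, H n →L[ℂ] H (n + 1))

theorem prodSeg_add (a l : ℕ) :
    prodSeg A a (a + l) = prodLen A a l := by
  rw [prodSeg, dif_pos (Nat.le_add_right a l)]
  exact eq_of_heq
    ((eqRec_heq_self _ _).trans (congr_arg_heq (prodLen A a) (Nat.add_sub_cancel_left a l)))

theorem prodSeg_self (a : ℕ) :
    prodSeg A a a = ContinuousLinearMap.id ℂ (H a) :=
  prodSeg_add A a 0

theorem prodSeg_succ {a b : ℕ} (hab : a ≤ b) :
    prodSeg A a (b + 1) = A b ∘L prodSeg A a b := by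
  obtain ⟨l, rfl⟩ := Nat.exists_eq_add_of_le hab
  rw [prodSeg_add A a l]
  exact prodSeg_add A a (l + 1)

variable [∀ n, CompleteSpace (H n)] {A}

theorem sum_norm_defectOp_sq {m : ℕ} (hA : ∀ i < m, ‖A i‖ ≤ 1) (h : H 0) :
    ∑ i ∈ Finset.range m, ‖defectOp (A i) (prodSeg A 0 i h)‖ ^ 2
      = ‖h‖ ^ 2 - ‖prodSeg A 0 m h‖ ^ 2 := by
  induction m with
  | zero => simp [prodSeg_self]
  | succ m ih =>
    rw [Finset.sum_range_succ, ih fun i hi => hA i (by omega),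
      norm_defectOp_apply_sq (hA m (by omega)), prodSeg_succ A (Nat.zero_le m),
      comp_apply]
    ring

theorem norm_prodSeg_le_one {m : ℕ} (hA : ∀ i < m, ‖A i‖ ≤ 1) : ‖prodSeg A 0 m‖ ≤ 1 := by
  refine opNorm_le_bound _ zero_le_one fun h => ?_
  have hsum := sum_norm_defectOp_sq hA h
  have : ‖prodSeg A 0 m h‖ ^ 2 ≤ ‖h‖ ^ 2 := by
    have := Finset.sum_nonneg fun i (_ : i ∈ Finset.range m) =>
      sq_nonneg ‖defectOp (A i) (prodSeg A 0 i h)‖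
    linarith
  rw [one_mul]
  exact (pow_le_pow_iff_left₀ (norm_nonneg _) (norm_nonneg _) two_ne_zero).1 this

theorem norm_defectTuple {m : ℕ} (hA : ∀ i < m, ‖A i‖ ≤ 1) (h : H 0) :
    ‖defectTuple A m h‖ = ‖defectOp (prodSeg A 0 m) h‖ := by
  rw [← sq_eq_sq₀ (norm_nonneg _) (norm_nonneg _), PiLp.norm_sq_eq_of_L2,
    norm_defectOp_apply_sq (norm_prodSeg_le_one hA), ← sum_norm_defectOp_sq hA,
    ← Fin.sum_univ_eq_sum_range (fun i => ‖defectOp (A i) (prodSeg A 0 i h)‖ ^ 2)]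
  rfl

theorem defectTuple_sub (m : ℕ) (u v : H 0) :
    defectTuple A m (u - v) = defectTuple A m u - defectTuple A m v := by
  ext i
  simp [defectTuple]

theorem dist_defectTuple {m : ℕ} (hA : ∀ i < m, ‖A i‖ ≤ 1) (u v : H 0) :
    dist (defectTuple A m u) (defectTuple A m v)
      = dist (⟨defectOp (prodSeg A 0 m) u, defectOp_mem _ _⟩ : defectSpace (prodSeg A 0 m))
          ⟨defectOp (prodSeg A 0 m) v, defectOp_mem _ _⟩ := by
  rw [dist_eq_norm, ← defectTuple_sub, norm_defectTuple hA, Subtype.dist_eq, dist_eq_norm, map_sub]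

theorem isRegularFactorization_zero : IsRegularFactorization A 0 :=
  Function.Surjective.denseRange fun _ => ⟨0, Subsingleton.elim _ _⟩

theorem isRegularFactorization_succ_iff_denseRange (m : ℕ) :
    IsRegularFactorization A (m + 1) ↔ DenseRange fun h =>
      ((⟨defectOp (A m) (prodSeg A 0 m h), defectOp_mem _ _⟩ : defectSpace (A m)),
        defectTuple A m h) := by
  rw [IsRegularFactorization, ← DenseRange, ← (PiLp.snocHomeomorph 2 _).denseRange_comp_iff]
  rfl

theorem isRegularFactorization_succ_iff {m : ℕ} (hA : ∀ i < m, ‖A i‖ ≤ 1) :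
    IsRegularFactorization A (m + 1) ↔
      IsRegularFactorization A m ∧ IsRegularPair (A m) (prodSeg A 0 m) := by
  have hiff (hm : IsRegularFactorization A m) := denseRange_prodMk_iff_of_dist_eq (φ := fun h =>
      (⟨defectOp (A m) (prodSeg A 0 m h), defectOp_mem _ _⟩ : defectSpace (A m)))
    hm (denseRange_defectOp (prodSeg A 0 m)) (dist_defectTuple hA)
  rw [isRegularFactorization_succ_iff_denseRange, isRegularPair_iff]
  refine ⟨fun hd => ?_, fun ⟨hm, hp⟩ => (hiff hm).2 hp⟩
  have hm : IsRegularFactorization A m :=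
    (Prod.snd_surjective.denseRange).comp hd continuous_snd
  exact ⟨hm, (hiff hm).1 hd⟩

theorem isRegularFactorization_iff_forall_isRegularPair {k : ℕ} (hA : ∀ i < k, ‖A i‖ ≤ 1) :
    IsRegularFactorization A k ↔ ∀ j < k, IsRegularPair (A j) (prodSeg A 0 j) := by
  induction k with
  | zero => simpa using isRegularFactorization_zero
  | succ m ih =>
    rw [isRegularFactorization_succ_iff fun i hi => hA i (by omega),
      ih fun i hi => hA i (by omega), Nat.forall_lt_succ_right]

end Chain

theorem statement5_general {H : ℕ → Type*} [∀ n, NormedAddCommGroup (H n)]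
    [∀ n, InnerProductSpace ℂ (H n)] [∀ n, CompleteSpace (H n)]
    (k : ℕ) (A : ∀ n, H n →L[ℂ] H (n + 1))
    (hA : ∀ i : Fin k, ‖A (i : ℕ)‖ ≤ 1) :
    IsRegularFactorization A k ↔
      ∀ j : ℕ, 0 < j → j < k → IsRegularPair (A j) (prodSeg A 0 j) := by
  rw [isRegularFactorization_iff_forall_isRegularPair fun i hi => hA ⟨i, hi⟩]
  refine ⟨fun h j _ hj => h j hj, fun h j hj => ?_⟩
  rcases Nat.eq_zero_or_pos j with rfl | hj0
  · rw [prodSeg_self]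
    exact isRegularPair_id (A 0)
  · exact h j hj0 hj

/-- A factorization `A = A_k ⋯ A_1` into contractions is `k`-regular iff for
every `j = 1, …, k-1` the two-factor factorization `A_{j+1} ∘ (A_j ⋯ A_1)` of the contraction
`A_{j+1} A_j ⋯ A_1` is `2`-regular. -/
theorem statement5 {H : ℕ → Type*} [∀ n, NormedAddCommGroup (H n)]
    [∀ n, InnerProductSpace ℂ (H n)] [∀ n, CompleteSpace (H n)]
    (k : ℕ) (hk : 2 ≤ k) (A : ∀ n, H n →L[ℂ] H (n + 1))
    (hA : ∀ i : Fin k, ‖A (i : ℕ)‖ ≤ 1) :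
    IsRegularFactorization A k ↔
      ∀ j : ℕ, 0 < j → j < k → IsRegularPair (A j) (prodSeg A 0 j) :=
  statement5_general k A hA
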